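/- The Perron eigenvalue survives one mixing window: under (HP1)–(HP3), λ_n^{T_n} → 1 as n → ∞. -/

import Mathlib

open Finset Filter

/-- The kernel of the chain killed at `x`: all entries from or to `x` are set to zero.
For `y, z ≠ x` the powers of `killed P x` agree with the powers of the principal
submatrix `[P]_x` of `P` obtained by deleting the row and the column indexed by `x`. -/
def killed {n : ℕ} (P : Matrix (Fin n) (Fin n) ℝ) (x : Fin n) :
    Matrix (Fin n) (Fin n) ℝ :=
  Matrix.of fun y z => if y = x ∨ z = x then 0 else P y z

/-- The no-hit probability `ℙ_α(τ_x > t) = Σ_{y ≠ x} Σ_{z ≠ x} α(y)·([P]_x)^t(y,z)`. -/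
def noHit {n : ℕ} (P : Matrix (Fin n) (Fin n) ℝ) (x : Fin n)
    (a : Fin n → ℝ) (t : ℕ) : ℝ :=
  ∑ y ∈ Finset.univ.erase x, ∑ z ∈ Finset.univ.erase x, a y * ((killed P x) ^ t) y z

/-- The expected number of returns to `x` within time `T`:
`R_T(x) = Σ_{t=0}^{T} P^t(x,x)`. -/
def returns {n : ℕ} (P : Matrix (Fin n) (Fin n) ℝ) (x : Fin n) (T : ℕ) : ℝ :=
  ∑ t ∈ Finset.range (T + 1), (P ^ t) x x

/-!
Write `K` for the chain killed at `x`, `μ` for its quasi-stationary law and `λ` for its Perron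
value, and let `e` be the mixing error at time `T`.

Since `μ K^T = λ^T μ ≤ μ P^T`, one more step sends at least `λ^T (1 - λ)` into `x`, while mixing
bounds `μ P^{T+1}(x)` by `π(x) + e`. So once `λ^T ≥ 1/2` we get `1 - λ ≤ 2 (π(x) + e)`, and by
Bernoulli `1 - λ^T ≤ 2 T (π(x) + e)`, which tends to `0` by (HP2) and by (HP1) with (HP3).

For `λ^T ≥ 1/2`: by stationarity the `π`-average of the expected number of visits to `x` at times
`1, …, T` is `T π(x)`, which is small, so by Markov the set `G` of states from which this number is
at most `1/3` carries almost all of `π`. From `y ∈ G` the chain is in `G` at time `T` with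
probability close to `π(G)`, and it has visited `x` with probability at most `1/3`; hence every
row of `K^T` has mass at least `1/2` on `G`. As `μ > 0` off `x` by irreducibility of `K`, the
Collatz–Wielandt bound gives `λ^T ≥ 1/2`.
-/

open Matrix

section FiniteState

variable {ι : Type*} [Fintype ι]

lemma pow_apply_le_pow_apply [DecidableEq ι] {A B : Matrix ι ι ℝ} (hA : ∀ i j, 0 ≤ A i j)
    (hAB : ∀ i j, A i j ≤ B i j) (m : ℕ) (i j : ι) : (A ^ m) i j ≤ (B ^ m) i j := by
  induction m generalizing j with
  | zero => rfl
  | succ m ih =>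
    rw [pow_succ, pow_succ, mul_apply, mul_apply]
    exact sum_le_sum fun k _ => mul_le_mul (ih k) (hAB k j) (hA k j)
      (pow_apply_nonneg (fun i j => (hA i j).trans (hAB i j)) m i k)

lemma vecMul_pow_eq_smul [DecidableEq ι] {A : Matrix ι ι ℝ} {μ : ι → ℝ} {r : ℝ}
    (h : μ ᵥ* A = r • μ) (m : ℕ) : μ ᵥ* (A ^ m) = r ^ m • μ := by
  induction m with
  | zero => simp
  | succ m ih => rw [pow_succ, ← vecMul_vecMul, ih, smul_vecMul, h, smul_smul, pow_succ]

lemma vecMul_apply_le {ν : ι → ℝ} (hν : ∀ i, 0 ≤ ν i) (hν₁ : ∑ i, ν i = 1)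
    {M : Matrix ι ι ℝ} {z : ι} {b : ℝ} (hM : ∀ w, M w z ≤ b) : (ν ᵥ* M) z ≤ b :=
  calc (ν ᵥ* M) z = ∑ w, ν w * M w z := vecMul_apply_eq_sum ν M z
    _ ≤ ∑ w, ν w * b := sum_le_sum fun w _ => mul_le_mul_of_nonneg_left (hM w) (hν w)
    _ = b := by rw [← sum_mul, hν₁, one_mul]

lemma pos_of_vecMul_eq_smul [DecidableEq ι] {A : Matrix ι ι ℝ} (hA : ∀ i j, 0 ≤ A i j)
    {μ : ι → ℝ} (hμ : ∀ i, 0 ≤ μ i) {r : ℝ} (hr : 0 < r) (h : μ ᵥ* A = r • μ) {y z : ι}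
    (hy : 0 < μ y) {t : ℕ} (hyz : 0 < (A ^ t) y z) : 0 < μ z := by
  have hle : μ y * (A ^ t) y z ≤ (μ ᵥ* (A ^ t)) z :=
    single_le_sum (f := fun w => μ w * (A ^ t) w z)
      (fun w _ => mul_nonneg (hμ w) (pow_apply_nonneg hA t w z)) (mem_univ y)
  rw [vecMul_pow_eq_smul h, Pi.smul_apply, smul_eq_mul] at hle
  exact (mul_pos_iff_of_pos_left (pow_pos hr t)).1 ((mul_pos hy hyz).trans_le hle)

/-- A Collatz–Wielandt lower bound for the Perron value. -/
lemma le_of_vecMul_eq_smul {A : Matrix ι ι ℝ} (hA : ∀ i j, 0 ≤ A i j) {μ : ι → ℝ}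
    (hμ : ∀ i, 0 ≤ μ i) {r s : ℝ} (h : μ ᵥ* A = r • μ) {G : Finset ι}
    (hG : ∀ y ∈ G, s ≤ ∑ z ∈ G, A y z) (hμG : 0 < ∑ z ∈ G, μ z) : s ≤ r := by
  refine le_of_mul_le_mul_right ?_ hμG
  calc s * ∑ z ∈ G, μ z = ∑ y ∈ G, μ y * s := by rw [mul_sum]; simp_rw [mul_comm]
    _ ≤ ∑ y ∈ G, μ y * ∑ z ∈ G, A y z :=
      sum_le_sum fun y hy => mul_le_mul_of_nonneg_left (hG y hy) (hμ y)
    _ = ∑ z ∈ G, ∑ y ∈ G, μ y * A y z := by simp_rw [mul_sum]; exact sum_comm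
    _ ≤ ∑ z ∈ G, (μ ᵥ* A) z := sum_le_sum fun z _ =>
      sum_le_sum_of_subset_of_nonneg (subset_univ G) fun y _ _ => mul_nonneg (hμ y) (hA y z)
    _ = r * ∑ z ∈ G, μ z := by rw [h, mul_sum]; rfl

lemma sum_vecMul_eq_one [DecidableEq ι] {P : Matrix ι ι ℝ} (hP : P ∈ rowStochastic ℝ ι)
    {ν : ι → ℝ} (hν₁ : ∑ i, ν i = 1) : ∑ i, (ν ᵥ* P) i = 1 := by
  simpa [dotProduct_one] using
    vecMul_dotProduct_one_eq_one_rowStochastic hP (by rwa [dotProduct_one])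

/-- Markov's inequality for the probability vector `π`, with the atom `x` set aside. -/
lemma one_sub_sub_le_sum_filter [DecidableEq ι] {π f : ι → ℝ} (hπ : ∀ i, 0 ≤ π i)
    (hπ₁ : ∑ i, π i = 1) (hf : ∀ i, 0 ≤ f i) (x : ι) {s : ℝ} (hs : 0 < s) :
    1 - π x - (∑ i, π i * f i) / s ≤ ∑ i ∈ univ.filter (fun i => i ≠ x ∧ f i ≤ s), π i := by
  have hsplit : ∀ i, π i ≤ (if i = x then π i else 0) +
      (if i ≠ x ∧ f i ≤ s then π i else 0) + π i * f i / s := by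
    intro i
    have hfs : 0 ≤ π i * f i / s := div_nonneg (mul_nonneg (hπ i) (hf i)) hs.le
    by_cases hix : i = x
    · simpa [hix] using hfs
    by_cases hfi : f i ≤ s
    · simp [hix, hfi, hfs]
    · simp only [hix, hfi, if_false, and_false, zero_add]
      rw [le_div_iff₀ hs]
      nlinarith [hπ i]
  have := sum_le_sum fun i (_ : i ∈ univ) => hsplit i
  rw [hπ₁, sum_add_distrib, sum_add_distrib, sum_ite_eq', ← sum_filter, ← sum_div] at this
  simp only [mem_univ, if_true] at this
  linarith

end FiniteState

section Visits

variable {ι : Type*} [Fintype ι] [DecidableEq ι]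

/-- The expected number of visits to `x` at times `1, …, T` of the chain started at `y`. -/
def visits (P : Matrix ι ι ℝ) (x : ι) (T : ℕ) (y : ι) : ℝ :=
  ∑ t ∈ range T, (P ^ (t + 1)) y x

lemma visits_nonneg {P : Matrix ι ι ℝ} (hP : ∀ i j, 0 ≤ P i j) (x : ι) (T : ℕ) (y : ι) :
    0 ≤ visits P x T y :=
  sum_nonneg fun t _ => pow_apply_nonneg hP (t + 1) y x

lemma visits_succ (P : Matrix ι ι ℝ) (x : ι) (T : ℕ) (y : ι) :
    visits P x (T + 1) y = P y x + ∑ w, P y w * visits P x T w := by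
  simp only [visits, sum_range_succ', mul_sum]
  rw [sum_comm, zero_add, pow_one, add_comm]
  congr 1
  exact sum_congr rfl fun t _ => by rw [pow_succ' P (t + 1), mul_apply]

lemma sum_mul_visits {P : Matrix ι ι ℝ} {π : ι → ℝ} (hπ : π ᵥ* P = π) (x : ι) (T : ℕ) :
    ∑ y, π y * visits P x T y = T * π x := by
  simp only [visits, mul_sum]
  rw [sum_comm]
  have hstat : ∀ t, π ᵥ* (P ^ t) = π := fun t => by
    simpa using vecMul_pow_eq_smul (r := 1) (by rwa [one_smul]) t
  simp [← vecMul_apply_eq_sum, hstat]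

end Visits

section Killed

variable {n : ℕ} {P : Matrix (Fin n) (Fin n) ℝ} {x : Fin n}

lemma killed_nonneg (hP : ∀ i j, 0 ≤ P i j) (y z : Fin n) : 0 ≤ killed P x y z := by
  simp only [killed, of_apply]
  split_ifs
  exacts [le_rfl, hP y z]

lemma killed_le (hP : ∀ i j, 0 ≤ P i j) (y z : Fin n) : killed P x y z ≤ P y z := by
  simp only [killed, of_apply]
  split_ifs
  exacts [hP y z, le_rfl]

lemma sum_killed_apply_of_ne (hP : P ∈ rowStochastic ℝ (Fin n)) {y : Fin n} (hy : y ≠ x) :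
    ∑ w, killed P x y w = 1 - P y x := by
  rw [← sum_row_of_mem_rowStochastic hP y, ← add_sum_erase _ _ (mem_univ x),
    ← add_sum_erase _ _ (mem_univ x)]
  simp only [killed, of_apply, or_true, if_true, zero_add, add_sub_cancel_left]
  exact sum_congr rfl fun w hw => by simp [hy, ne_of_mem_erase hw]

lemma vecMul_killed_apply_of_ne {μ : Fin n → ℝ} (hμx : μ x = 0) {z : Fin n} (hz : z ≠ x) :
    (μ ᵥ* killed P x) z = (μ ᵥ* P) z := by
  rw [vecMul_apply_eq_sum, vecMul_apply_eq_sum]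
  refine sum_congr rfl fun y _ => ?_
  by_cases hy : y = x
  · simp [hy, hμx]
  · simp [killed, hy, hz]

/-- Union bound: a path killed by time `m` visits `x` at one of the times `1, …, m`. -/
lemma one_sub_sum_killed_pow_apply_le (hP : P ∈ rowStochastic ℝ (Fin n)) {y : Fin n}
    (hy : y ≠ x) (m : ℕ) : 1 - ∑ z, (killed P x ^ m) y z ≤ visits P x m y := by
  induction m generalizing y with
  | zero => simp [visits, one_apply]
  | succ m ih =>
    have hP₀ : ∀ i j, 0 ≤ P i j := fun _ _ => nonneg_of_mem_rowStochastic hP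
    have hfirst : 1 - ∑ z, (killed P x ^ (m + 1)) y z
        = P y x + ∑ w, killed P x y w * (1 - ∑ z, (killed P x ^ m) w z) := by
      simp only [pow_succ', mul_apply, mul_sub, mul_one, sum_sub_distrib,
        sum_killed_apply_of_ne hP hy, mul_sum]
      rw [sum_comm]
      ring
    rw [hfirst, visits_succ]
    refine add_le_add le_rfl (sum_le_sum fun w _ => ?_)
    by_cases hw : w = x
    · simp [hw, killed, mul_nonneg (hP₀ y x) (visits_nonneg hP₀ x m x)]
    · calc killed P x y w * (1 - ∑ z, (killed P x ^ m) w z)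
          ≤ killed P x y w * visits P x m w :=
            mul_le_mul_of_nonneg_left (ih hw) (killed_nonneg hP₀ y w)
        _ ≤ P y w * visits P x m w :=
            mul_le_mul_of_nonneg_right (killed_le hP₀ y w) (visits_nonneg hP₀ x m w)

lemma sum_pow_apply_sub_visits_le (hP : P ∈ rowStochastic ℝ (Fin n)) {y : Fin n} (hy : y ≠ x)
    (m : ℕ) (G : Finset (Fin n)) :
    ∑ z ∈ G, (P ^ m) y z - visits P x m y ≤ ∑ z ∈ G, (killed P x ^ m) y z := by
  have hP₀ : ∀ i j, 0 ≤ P i j := fun _ _ => nonneg_of_mem_rowStochastic hP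
  have hdiff : ∑ z ∈ G, ((P ^ m) y z - (killed P x ^ m) y z)
      ≤ ∑ z, ((P ^ m) y z - (killed P x ^ m) y z) :=
    sum_le_sum_of_subset_of_nonneg (subset_univ G) fun z _ _ =>
      sub_nonneg.2 (pow_apply_le_pow_apply (killed_nonneg hP₀) (killed_le hP₀) m y z)
  rw [sum_sub_distrib, sum_sub_distrib, sum_row_of_mem_rowStochastic (pow_mem hP m)] at hdiff
  linarith [one_sub_sum_killed_pow_apply_le hP hy m]

section QuasiStationary

variable {μ : Fin n → ℝ} {r : ℝ}

lemma vecMul_apply_self_eq_one_sub (hP : P ∈ rowStochastic ℝ (Fin n)) (hμ₁ : ∑ y, μ y = 1)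
    (hμx : μ x = 0) (hqs : μ ᵥ* killed P x = r • μ) : (μ ᵥ* P) x = 1 - r := by
  have htotal := sum_vecMul_eq_one hP hμ₁
  have hrest : ∑ z ∈ univ.erase x, (μ ᵥ* P) z = r := by
    rw [sum_congr rfl fun z hz => (vecMul_killed_apply_of_ne hμx (ne_of_mem_erase hz)).symm,
      hqs]
    simp only [Pi.smul_apply, smul_eq_mul]
    rw [← mul_sum, sum_erase _ hμx, hμ₁, mul_one]
  rw [← add_sum_erase _ _ (mem_univ x), hrest] at htotal
  linarith

lemma pow_mul_one_sub_le_vecMul_pow_succ_apply (hP : P ∈ rowStochastic ℝ (Fin n))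
    (hμ : ∀ y, 0 ≤ μ y) (hμ₁ : ∑ y, μ y = 1) (hμx : μ x = 0)
    (hqs : μ ᵥ* killed P x = r • μ) (T : ℕ) :
    r ^ T * (1 - r) ≤ (μ ᵥ* (P ^ (T + 1))) x := by
  have hP₀ : ∀ i j, 0 ≤ P i j := fun _ _ => nonneg_of_mem_rowStochastic hP
  have hdom : ∀ w, r ^ T * μ w ≤ (μ ᵥ* (P ^ T)) w := fun w => by
    rw [← smul_eq_mul, ← Pi.smul_apply, ← vecMul_pow_eq_smul hqs, vecMul_apply_eq_sum,
      vecMul_apply_eq_sum]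
    exact sum_le_sum fun y _ => mul_le_mul_of_nonneg_left
      (pow_apply_le_pow_apply (killed_nonneg hP₀) (killed_le hP₀) T y w) (hμ y)
  calc r ^ T * (1 - r) = ∑ w, r ^ T * μ w * P w x := by
        rw [← vecMul_apply_self_eq_one_sub hP hμ₁ hμx hqs, vecMul_apply_eq_sum, mul_sum]
        exact sum_congr rfl fun w _ => (mul_assoc _ _ _).symm
    _ ≤ ∑ w, (μ ᵥ* (P ^ T)) w * P w x :=
        sum_le_sum fun w _ => mul_le_mul_of_nonneg_right (hdom w) (hP₀ w x)
    _ = (μ ᵥ* (P ^ (T + 1))) x := by rw [pow_succ, ← vecMul_vecMul, vecMul_apply_eq_sum]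

end QuasiStationary

end Killed

lemma mul_div_rpow_le {n k c δ : ℝ} (hn : 1 ≤ n) (hk : k ≤ n ^ 2) (hc : 2 ≤ c) (hδ : 0 ≤ δ) :
    k * (δ / n ^ c) ≤ δ := by
  have hnc : n ^ 2 ≤ n ^ c := by
    rw [← Real.rpow_natCast]
    exact Real.rpow_le_rpow_of_exponent_le hn (by norm_num [hc])
  rw [← mul_div_assoc, div_le_iff₀ (Real.rpow_pos_of_pos (by linarith) c)]
  nlinarith

section Mixing

variable {n : ℕ} {P : Matrix (Fin n) (Fin n) ℝ} {π : Fin n → ℝ} {x : Fin n} {μ : Fin n → ℝ}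
  {r : ℝ} {T : ℕ} {e : ℝ}

theorem half_le_pow_of_mixing (hP : P ∈ rowStochastic ℝ (Fin n)) (hπ : ∀ y, 0 ≤ π y)
    (hπ₁ : ∑ y, π y = 1) (hπP : π ᵥ* P = π)
    (hirr : ∀ y z, y ≠ x → z ≠ x → ∃ t, 0 < (killed P x ^ t) y z)
    (hr : 0 < r) (hμ : ∀ y, 0 ≤ μ y) (hμ₁ : ∑ y, μ y = 1) (hμx : μ x = 0)
    (hqs : μ ᵥ* killed P x = r • μ) (hT : T ≠ 0) (he : 0 ≤ e)
    (hmix : ∀ y z, π z - e ≤ (P ^ T) y z) (hsmall : 4 * (T * π x) + n * e ≤ 1 / 6) :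
    1 / 2 ≤ r ^ T := by
  have hP₀ : ∀ i j, 0 ≤ P i j := fun _ _ => nonneg_of_mem_rowStochastic hP
  have hx : π x ≤ T * π x :=
    le_mul_of_one_le_left (hπ x) (by exact_mod_cast Nat.one_le_iff_ne_zero.2 hT)
  set G := univ.filter fun y => y ≠ x ∧ visits P x T y ≤ 1 / 3
  have hπG : 5 / 6 ≤ ∑ z ∈ G, π z - n * e := by
    have := one_sub_sub_le_sum_filter hπ hπ₁ (visits_nonneg hP₀ x T) x (s := 1 / 3)
      (by norm_num)
    rw [sum_mul_visits hπP] at this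
    nlinarith
  have hrowG : ∀ y ∈ G, 1 / 2 ≤ ∑ z ∈ G, (killed P x ^ T) y z := by
    intro y hy
    obtain ⟨hyx, hvis⟩ := (mem_filter.1 hy).2
    have hcard : (G.card : ℝ) ≤ n := by
      exact_mod_cast (card_le_univ G).trans_eq (Fintype.card_fin n)
    have hlow : ∑ z ∈ G, π z - n * e ≤ ∑ z ∈ G, (P ^ T) y z :=
      calc ∑ z ∈ G, π z - n * e ≤ ∑ z ∈ G, π z - G.card * e := by gcongr
        _ = ∑ z ∈ G, (π z - e) := by rw [sum_sub_distrib, sum_const, nsmul_eq_mul]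
        _ ≤ ∑ z ∈ G, (P ^ T) y z := sum_le_sum fun z _ => hmix y z
    linarith [sum_pow_apply_sub_visits_le hP hyx T G]
  obtain ⟨z, hzG, -⟩ : ∃ z ∈ G, (0 : ℝ) < π z :=
    exists_lt_of_sum_lt (f := 0) (by simp only [Pi.zero_apply, sum_const_zero]; nlinarith)
  obtain ⟨y, -, hy⟩ : ∃ y ∈ univ, (0 : ℝ) < μ y :=
    exists_lt_of_sum_lt (f := 0) (by simp [hμ₁])
  have hyx : y ≠ x := by rintro rfl; linarith
  obtain ⟨t, ht⟩ := hirr y z hyx (mem_filter.1 hzG).2.1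
  have hμz := pos_of_vecMul_eq_smul (killed_nonneg hP₀) hμ hr hqs hy ht
  exact le_of_vecMul_eq_smul (pow_apply_nonneg (killed_nonneg hP₀) T) hμ
    (vecMul_pow_eq_smul hqs T) hrowG (sum_pos' (fun i _ => hμ i) ⟨z, hzG, hμz⟩)

theorem one_sub_pow_le_of_mixing (hP : P ∈ rowStochastic ℝ (Fin n)) (hπ : ∀ y, 0 ≤ π y)
    (hπ₁ : ∑ y, π y = 1) (hπP : π ᵥ* P = π)
    (hirr : ∀ y z, y ≠ x → z ≠ x → ∃ t, 0 < (killed P x ^ t) y z)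
    (hr : 0 < r) (hμ : ∀ y, 0 ≤ μ y) (hμ₁ : ∑ y, μ y = 1) (hμx : μ x = 0)
    (hqs : μ ᵥ* killed P x = r • μ) (hT : T ≠ 0)
    (hmix : ∀ y z, |(P ^ T) y z - π z| ≤ e) (hsmall : 4 * (T * π x) + n * e ≤ 1 / 6) :
    1 - r ^ T ≤ 2 * T * (π x + e) := by
  have he : 0 ≤ e := (abs_nonneg _).trans (hmix x x)
  have hhalf : 1 / 2 ≤ r ^ T :=
    half_le_pow_of_mixing hP hπ hπ₁ hπP hirr hr hμ hμ₁ hμx hqs hT he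
      (fun y z => by linarith [(abs_le.1 (hmix y z)).1]) hsmall
  have hleak : r ^ T * (1 - r) ≤ π x + e := by
    refine (pow_mul_one_sub_le_vecMul_pow_succ_apply hP hμ hμ₁ hμx hqs T).trans ?_
    rw [pow_succ', ← vecMul_vecMul]
    exact vecMul_apply_le (nonneg_vecMul_of_mem_rowStochastic hP hμ) (sum_vecMul_eq_one hP hμ₁)
      fun w => by linarith [(abs_le.1 (hmix w x)).2]
  have hbernoulli : 1 - r ^ T ≤ T * (1 - r) := by
    have := one_add_mul_le_pow (a := r - 1) (by linarith) T
    rw [add_sub_cancel] at this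
    linarith
  have hstep : 1 - r ≤ 2 * (π x + e) := by
    rcases le_or_gt r 1 with hr1 | hr1
    · nlinarith
    · linarith [hπ x]
  nlinarith

end Mixing

theorem perron_eigenvalue_survives_mixing_window_general
    (P : (n : ℕ) → Matrix (Fin n) (Fin n) ℝ)
    (pi : (n : ℕ) → Fin n → ℝ)
    (x : (n : ℕ) → Fin n)
    (T : ℕ → ℕ) (c : ℝ)
    (hc : 2 < c)
    (hnn : ∀ n : ℕ, 2 ≤ n → ∀ y z : Fin n, 0 ≤ P n y z)
    (hrow : ∀ n : ℕ, 2 ≤ n → ∀ y : Fin n, ∑ z, P n y z = 1)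
    (hpinn : ∀ n : ℕ, 2 ≤ n → ∀ y : Fin n, 0 ≤ pi n y)
    (hpisum : ∀ n : ℕ, 2 ≤ n → ∑ y, pi n y = 1)
    (hpistat : ∀ n : ℕ, 2 ≤ n → Matrix.vecMul (pi n) (P n) = pi n)
    (hkirr : ∀ n : ℕ, 2 ≤ n → ∀ y z : Fin n, y ≠ x n → z ≠ x n →
      ∃ t : ℕ, 0 < ((killed (P n) (x n)) ^ t) y z)
    (lam : ℕ → ℝ) (mu : (n : ℕ) → Fin n → ℝ)
    (hlam : ∀ n : ℕ, 2 ≤ n → lam n ∈ Set.Ioo (0 : ℝ) 1)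
    (hmunn : ∀ n : ℕ, 2 ≤ n → ∀ y : Fin n, 0 ≤ mu n y)
    (hmux : ∀ n : ℕ, 2 ≤ n → mu n (x n) = 0)
    (hmusum : ∀ n : ℕ, 2 ≤ n → ∑ y, mu n y = 1)
    (hmuqs : ∀ n : ℕ, 2 ≤ n →
      Matrix.vecMul (mu n) (killed (P n) (x n)) = lam n • mu n)
    (HP1 : ∀ ε : ℝ, 0 < ε → ∃ N : ℕ, ∀ n : ℕ, N ≤ n → ∀ y z : Fin n,
      (n : ℝ) ^ c * |(P n ^ T n) y z - pi n z| < ε)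
    (HP2 : ∀ ε : ℝ, 0 < ε → ∃ N : ℕ, ∀ n : ℕ, N ≤ n → ∀ y : Fin n,
      (T n : ℝ) * pi n y < ε)
    (HP3 : ∀ M : ℝ, ∃ N : ℕ, ∀ n : ℕ, N ≤ n → ∀ y : Fin n,
      M < (n : ℝ) ^ 2 * pi n y)
    :
    Filter.Tendsto (fun n => lam n ^ T n) Filter.atTop (nhds (1 : ℝ)) := by
  rw [Metric.tendsto_atTop]
  intro ε hε
  -- `δ ≤ 1/30` gives the smallness `4 T π(x) + n e ≤ 1/6`, and `δ ≤ ε/8` the final `4 δ < ε`.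
  set δ := min (ε / 8) (1 / 30)
  have hδ : 0 < δ := by positivity
  have hδε : δ ≤ ε / 8 := min_le_left _ _
  have hδ₁ : δ ≤ 1 / 30 := min_le_right _ _
  obtain ⟨N₁, hN₁⟩ := HP1 δ hδ
  obtain ⟨N₂, hN₂⟩ := HP2 δ hδ
  obtain ⟨N₃, hN₃⟩ := HP3 1
  refine ⟨max (max N₁ N₂) (max N₃ 2), fun n hn => ?_⟩
  simp only [max_le_iff] at hn
  obtain ⟨⟨hn₁, hn₂⟩, hn₃, hn⟩ := hn
  obtain ⟨hlam₀, hlam₁⟩ := hlam n hn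
  rw [Real.dist_eq, abs_of_nonpos (sub_nonpos.2 (pow_le_one₀ hlam₀.le hlam₁.le)), neg_sub]
  rcases eq_or_ne (T n) 0 with hT₀ | hT₀
  · simpa [hT₀] using hε
  have hn₀ : (1 : ℝ) ≤ n := by exact_mod_cast (by omega : 1 ≤ n)
  have hTπ := hN₂ n hn₂ (x n)
  have hTn : (T n : ℝ) ≤ n ^ 2 := by nlinarith [hN₃ n hn₃ (x n), hpinn n hn (x n)]
  have hmix : ∀ y z, |(P n ^ T n) y z - pi n z| ≤ δ / n ^ c := fun y z => by
    rw [le_div_iff₀' (by positivity)]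
    exact (hN₁ n hn₁ y z).le
  have hTe := mul_div_rpow_le hn₀ hTn hc.le hδ.le
  have hne := mul_div_rpow_le hn₀ (by nlinarith : (n : ℝ) ≤ n ^ 2) hc.le hδ.le
  have := one_sub_pow_le_of_mixing (mem_rowStochastic_iff_sum.2 ⟨hnn n hn, hrow n hn⟩)
    (hpinn n hn) (hpisum n hn) (hpistat n hn) (hkirr n hn) hlam₀ (hmunn n hn) (hmusum n hn)
    (hmux n hn) (hmuqs n hn) hT₀ hmix (by linarith)
  linarith

theorem perron_eigenvalue_survives_mixing_window
    (P : (n : ℕ) → Matrix (Fin n) (Fin n) ℝ)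
    (pi : (n : ℕ) → Fin n → ℝ)
    (x : (n : ℕ) → Fin n)
    (T : ℕ → ℕ) (c : ℝ)
    (hc : 2 < c)
    (hT : Filter.Tendsto T Filter.atTop Filter.atTop)
    (hnn : ∀ n : ℕ, 2 ≤ n → ∀ y z : Fin n, 0 ≤ P n y z)
    (hrow : ∀ n : ℕ, 2 ≤ n → ∀ y : Fin n, ∑ z, P n y z = 1)
    (hirr : ∀ n : ℕ, 2 ≤ n → ∀ y z : Fin n, ∃ t : ℕ, 0 < (P n ^ t) y z)
    (hpinn : ∀ n : ℕ, 2 ≤ n → ∀ y : Fin n, 0 ≤ pi n y)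
    (hpisum : ∀ n : ℕ, 2 ≤ n → ∑ y, pi n y = 1)
    (hpistat : ∀ n : ℕ, 2 ≤ n → Matrix.vecMul (pi n) (P n) = pi n)
    (hpiuniq : ∀ n : ℕ, 2 ≤ n → ∀ rho : Fin n → ℝ, (∀ y, 0 ≤ rho y) →
      (∑ y, rho y = 1) → Matrix.vecMul rho (P n) = rho → rho = pi n)
    (hkirr : ∀ n : ℕ, 2 ≤ n → ∀ y z : Fin n, y ≠ x n → z ≠ x n →
      ∃ t : ℕ, 0 < ((killed (P n) (x n)) ^ t) y z)
    (lam : ℕ → ℝ) (mu : (n : ℕ) → Fin n → ℝ)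
    (hlam : ∀ n : ℕ, 2 ≤ n → lam n ∈ Set.Ioo (0 : ℝ) 1)
    (hmunn : ∀ n : ℕ, 2 ≤ n → ∀ y : Fin n, 0 ≤ mu n y)
    (hmux : ∀ n : ℕ, 2 ≤ n → mu n (x n) = 0)
    (hmusum : ∀ n : ℕ, 2 ≤ n → ∑ y, mu n y = 1)
    (hmuqs : ∀ n : ℕ, 2 ≤ n →
      Matrix.vecMul (mu n) (killed (P n) (x n)) = lam n • mu n)
    (HP1 : ∀ ε : ℝ, 0 < ε → ∃ N : ℕ, ∀ n : ℕ, N ≤ n → ∀ y z : Fin n,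
      (n : ℝ) ^ c * |(P n ^ T n) y z - pi n z| < ε)
    (HP2 : ∀ ε : ℝ, 0 < ε → ∃ N : ℕ, ∀ n : ℕ, N ≤ n → ∀ y : Fin n,
      (T n : ℝ) * pi n y < ε)
    (HP3 : ∀ M : ℝ, ∃ N : ℕ, ∀ n : ℕ, N ≤ n → ∀ y : Fin n,
      M < (n : ℝ) ^ 2 * pi n y)
    :
    Filter.Tendsto (fun n => lam n ^ T n) Filter.atTop (nhds (1 : ℝ)) :=
  perron_eigenvalue_survives_mixing_window_general P pi x T c hc hnn hrow hpinn hpisum hpistat hkirr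
    lam mu hlam hmunn hmux hmusum hmuqs HP1 HP2 HP3
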